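/- For the ODE ã' = k₂·u(ã)·(ã − 1/2) with u(ã) = √(4ã(1−ã)+1) − 1 and k₂ > 0: if ã(0) = 1/2 + δ with δ ∈ (0, 1/2), then ã is strictly increasing and converges to 1 as t → ∞; if ã(0) = 1/2 − δ, then ã strictly decreases to 0; and ã ≡ 1/2 is an (unstable) equilibrium. -/

import Mathlib

/-!
The drift `slowDrift k₂` is Lipschitz on `[1/2, 1]` and vanishes at both ends, so by backward
uniqueness a trajectory started in `(1/2, 1)` can never reach an end point: it stays inside, where
the drift is positive, and increases strictly. Its limit `L` must be a zero of the drift (otherwise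
`ã'` would tend to a nonzero constant), and the only zero in `(1/2, 1]` is `1`. The case below
`1/2` follows from the symmetry `slowDrift k₂ (1 - x) = -slowDrift k₂ x`.
-/

open Filter Set Topology NNReal

section AutonomousODE

variable {v : ℝ → ℝ} {K : ℝ≥0} {p q : ℝ} {a : ℝ → ℝ}

theorem eq_zero_of_tendsto_of_tendsto_deriv {f f' : ℝ → ℝ} {L c : ℝ}
    (hf : ∀ t, HasDerivAt f (f' t) t) (hfL : Tendsto f atTop (𝓝 L))
    (hf'c : Tendsto f' atTop (𝓝 c)) : c = 0 := by
  have hslope : ∀ t : ℝ, ∃ ξ ∈ Ioo t (t + 1), f' ξ = f (t + 1) - f t := fun t => by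
    simpa using exists_hasDerivAt_eq_slope f f' (lt_add_one t)
      (fun s _ => (hf s).continuousAt.continuousWithinAt) (fun s _ => hf s)
  choose ξ hξ hξf' using hslope
  have hξ_top : Tendsto ξ atTop atTop :=
    tendsto_atTop_mono (fun t => (hξ t).1.le) tendsto_id
  have hdiff : Tendsto (fun t => f (t + 1) - f t) atTop (𝓝 (L - L)) :=
    (hfL.comp (tendsto_atTop_add_const_right _ 1 tendsto_id)).sub hfL
  rw [sub_self] at hdiff
  refine tendsto_nhds_unique (hf'c.comp hξ_top) ?_
  simpa only [Function.comp_def, hξf'] using hdiff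

theorem mapsTo_Ioo_of_hasDerivAt (hv : LipschitzOnWith K v (Icc p q)) (hvp : v p = 0)
    (hvq : v q = 0) (ha : ∀ t, HasDerivAt a (v (a t)) t) (h0 : a 0 ∈ Ioo p q) :
    MapsTo a (Ici 0) (Ioo p q) := by
  have hcont : Continuous a := continuous_iff_continuousAt.mpr fun t => (ha t).continuousAt
  intro T hT
  by_contra hT_out
  obtain ⟨t₁, ⟨⟨ht₁0, ht₁T⟩, ht₁_out⟩, ht₁_least⟩ :
      ∃ t₁, IsLeast (Icc 0 T ∩ a ⁻¹' (Ioo p q)ᶜ) t₁ :=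
    (isCompact_Icc.inter_right (isOpen_Ioo.isClosed_compl.preimage hcont)).exists_isLeast
      ⟨T, ⟨hT, le_rfl⟩, hT_out⟩
  have ht₁_pos : 0 < t₁ := ht₁0.lt_of_ne fun h => ht₁_out (h ▸ h0)
  have hbefore : MapsTo a (Ico 0 t₁) (Ioo p q) := fun s hs => by
    by_contra h
    exact (ht₁_least ⟨⟨hs.1, hs.2.le.trans ht₁T⟩, h⟩).not_gt hs.2
  have hIcc : MapsTo a (Icc 0 t₁) (Icc p q) := by
    rw [← closure_Ico ht₁_pos.ne]
    exact fun t ht => (isClosed_Icc.preimage hcont).closure_subset_iff.mpr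
      (hbefore.mono_right Ioo_subset_Icc_self) ht
  have hrest : v (a t₁) = 0 := by
    have : a t₁ ∈ Icc p q \ Ioo p q := ⟨hIcc ⟨ht₁0, le_rfl⟩, ht₁_out⟩
    rw [Icc_sdiff_Ioo_same (h0.1.trans h0.2).le] at this
    rcases this with h | h <;> rw [h] <;> assumption
  have hconst : EqOn a (fun _ => a t₁) (Icc 0 t₁) :=
    ODE_solution_unique_of_mem_Icc_left (v := fun _ => v) (s := fun _ => Icc p q)
      (fun _ _ => hv) hcont.continuousOn (fun t _ => (ha t).hasDerivWithinAt)
      (fun t ht => hIcc (Ioc_subset_Icc_self ht)) continuousOn_const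
      (fun t _ => by simpa [hrest] using hasDerivWithinAt_const t (Iic t) (a t₁))
      (fun _ _ => hIcc ⟨ht₁0, le_rfl⟩) rfl
  exact ht₁_out (hconst ⟨le_rfl, ht₁0⟩ ▸ h0 :)

theorem strictMonoOn_Ici_of_hasDerivAt (hv : LipschitzOnWith K v (Icc p q)) (hvp : v p = 0)
    (hvq : v q = 0) (hpos : ∀ x ∈ Ioo p q, 0 < v x) (ha : ∀ t, HasDerivAt a (v (a t)) t)
    (h0 : a 0 ∈ Ioo p q) : StrictMonoOn a (Ici 0) :=
  strictMonoOn_of_hasDerivWithinAt_pos (convex_Ici 0)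
    (fun t _ => (ha t).continuousAt.continuousWithinAt) (fun t _ => (ha t).hasDerivWithinAt)
    fun _ ht => hpos _ (mapsTo_Ioo_of_hasDerivAt hv hvp hvq ha h0 (interior_subset ht))

theorem tendsto_of_hasDerivAt_of_pos (hv : LipschitzOnWith K v (Icc p q)) (hvp : v p = 0)
    (hvq : v q = 0) (hpos : ∀ x ∈ Ioo p q, 0 < v x) (ha : ∀ t, HasDerivAt a (v (a t)) t)
    (h0 : a 0 ∈ Ioo p q) : Tendsto a atTop (𝓝 q) := by
  have hmaps := mapsTo_Ioo_of_hasDerivAt hv hvp hvq ha h0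
  have hmono := (strictMonoOn_Ici_of_hasDerivAt hv hvp hvq hpos ha h0).monotoneOn
  obtain ⟨L, hL⟩ : ∃ L, Tendsto a atTop (𝓝 L) := by
    have hmono' : Monotone fun t : Ici (0 : ℝ) => a t := fun s t hst => hmono s.2 t.2 hst
    refine ⟨_, tendsto_comp_val_Ici_atTop.mp (tendsto_atTop_ciSup hmono' ?_)⟩
    exact ⟨q, by rintro _ ⟨t, rfl⟩; exact (hmaps t.2).2.le⟩
  have hLq : L ≤ q :=
    le_of_tendsto hL ((eventually_ge_atTop 0).mono fun t ht => (hmaps ht).2.le)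
  have h0L : a 0 ≤ L :=
    ge_of_tendsto hL ((eventually_ge_atTop 0).mono fun t ht => hmono self_mem_Ici ht ht)
  have hvL : v L = 0 := by
    have hL' : Tendsto a atTop (𝓝[Icc p q] L) := tendsto_nhdsWithin_iff.mpr
      ⟨hL, (eventually_ge_atTop 0).mono fun t ht => Ioo_subset_Icc_self (hmaps ht)⟩
    exact eq_zero_of_tendsto_of_tendsto_deriv ha hL
      ((hv.continuousOn L ⟨h0.1.le.trans h0L, hLq⟩).tendsto.comp hL')
  obtain rfl : L = q := by
    by_contra hLq'
    exact (hpos L ⟨h0.1.trans_le h0L, hLq.lt_of_ne hLq'⟩).ne' hvL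
  exact hL

end AutonomousODE

noncomputable def slowDrift (k x : ℝ) : ℝ := k * (Real.sqrt (4 * x * (1 - x) + 1) - 1) * (x - 1 / 2)

theorem slowDrift_one_sub (k x : ℝ) : slowDrift k (1 - x) = -slowDrift k x := by
  unfold slowDrift; ring_nf

theorem slowDrift_pos {k x : ℝ} (hk : 0 < k) (hx : x ∈ Ioo (1 / 2) 1) : 0 < slowDrift k x := by
  have hsqrt : 1 < Real.sqrt (4 * x * (1 - x) + 1) :=
    Real.lt_sqrt_of_sq_lt (by nlinarith [hx.1, hx.2])
  exact mul_pos (mul_pos hk (sub_pos.mpr hsqrt)) (by linarith [hx.1])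

theorem exists_lipschitzOnWith_slowDrift (k : ℝ) :
    ∃ K, LipschitzOnWith K (slowDrift k) (Icc (1 / 2) 1) := by
  have hsqrt : ContDiffOn ℝ 1 (fun x : ℝ => Real.sqrt (4 * x * (1 - x) + 1)) (Icc (1 / 2) 1) :=
    ContDiffOn.sqrt (by fun_prop) fun x hx => by nlinarith [hx.1, hx.2]
  exact ((contDiffOn_const.mul (hsqrt.sub contDiffOn_const)).mul
    (contDiffOn_id.sub contDiffOn_const)).exists_lipschitzOnWith one_ne_zero
    (convex_Icc _ _) isCompact_Icc

theorem hasDerivAt_one_sub_of_slowDrift {k : ℝ} {a : ℝ → ℝ}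
    (ha : ∀ t, HasDerivAt a (slowDrift k (a t)) t) (t : ℝ) :
    HasDerivAt (fun s => 1 - a s) (slowDrift k (1 - a t)) t := by
  simpa [slowDrift_one_sub] using (ha t).const_sub 1

/-- For the slow approximate-majority dynamics
`ã' = k₂ u(ã)(ã − 1/2)` with `u(ã) = √(4ã(1−ã)+1) − 1`:
starting above `1/2` the solution strictly increases to `1`, starting below
`1/2` it strictly decreases to `0`, and `ã ≡ 1/2` is an equilibrium. -/
theorem slow_am_dynamics (k₂ δ : ℝ) (hk₂ : 0 < k₂) (hδ : δ ∈ Set.Ioo (0 : ℝ) (1 / 2))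
    (a : ℝ → ℝ)
    (hode : ∀ t, HasDerivAt a
      (k₂ * (Real.sqrt (4 * a t * (1 - a t) + 1) - 1) * (a t - 1 / 2)) t) :
    (a 0 = 1 / 2 + δ → StrictMonoOn a (Set.Ici 0) ∧ Tendsto a atTop (nhds 1)) ∧
    (a 0 = 1 / 2 - δ → StrictAntiOn a (Set.Ici 0) ∧ Tendsto a atTop (nhds 0)) ∧
    (∀ t : ℝ, HasDerivAt (fun _ : ℝ => (1 / 2 : ℝ))
      (k₂ * (Real.sqrt (4 * (1 / 2 : ℝ) * (1 - 1 / 2) + 1) - 1) * ((1 / 2 : ℝ) - 1 / 2)) t) := by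
  obtain ⟨K, hK⟩ := exists_lipschitzOnWith_slowDrift k₂
  have hhalf : slowDrift k₂ (1 / 2) = 0 := by simp [slowDrift]
  have hone : slowDrift k₂ 1 = 0 := by simp [slowDrift]
  have above : ∀ b : ℝ → ℝ, (∀ t, HasDerivAt b (slowDrift k₂ (b t)) t) → b 0 = 1 / 2 + δ →
      StrictMonoOn b (Ici 0) ∧ Tendsto b atTop (𝓝 1) := fun b hb h0 => by
    have hb0 : b 0 ∈ Ioo (1 / 2) 1 := by rw [h0]; constructor <;> linarith [hδ.1, hδ.2]
    have hpos : ∀ x ∈ Ioo (1 / 2 : ℝ) 1, 0 < slowDrift k₂ x := fun _ => slowDrift_pos hk₂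
    exact ⟨strictMonoOn_Ici_of_hasDerivAt hK hhalf hone hpos hb hb0,
      tendsto_of_hasDerivAt_of_pos hK hhalf hone hpos hb hb0⟩
  refine ⟨above a hode, fun h0 => ?_, fun t => by simpa using hasDerivAt_const t (1 / 2 : ℝ)⟩
  obtain ⟨hmono, hlim⟩ :=
    above (fun t => 1 - a t) (hasDerivAt_one_sub_of_slowDrift hode) (by rw [h0]; ring)
  refine ⟨fun s hs t ht hst => by linarith [hmono hs ht hst], ?_⟩
  simpa using (tendsto_const_nhds (x := (1 : ℝ))).sub hlim
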